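/- Let I ⊆ ℝ be an interval, λ(t) = (t, 0), α: I → ℝ³ twice continuously differentiable, β: I → ℝ³ continuously differentiable, such that for every t ∈ I the vectors α′(t) and β(t) are lightlike, Lorentz-orthogonal, and (α′(t), β(t)) ≠ (0, 0). Let G be as in Proposition 3.1 (G = (α₁′+iα₂′)/α₃′ where α′ ≠ 0, G = (β₁+iβ₂)/β₃ where β₃ ≠ 0). Then [for all t ∈ I: α′(t) = 0 in ℝ³ and G′(t) ≠ 0] holds if and only if [α is constant on I and for all t ∈ I: β₁(t)β₂′(t) − β₂(t)β₁′(t) ≠ 0]. -/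

import Mathlib

/-!
A lightlike `β` with `β₃ = 0` vanishes, so on either side of the equivalence `β₃` never vanishes
on `I`: on the left because `α' = 0` and `(α', β) ≠ (0, 0)`, on the right because
`β₁β₂' - β₂β₁' ≠ 0`. Hence `G = (β₁ + iβ₂)/β₃` on all of `I`, a curve on the unit circle, and
differentiating gives `G' = i G (β₁β₂' - β₂β₁')/β₃²`. So `G' ≠ 0` exactly where the cross term is
nonzero, while `α' = 0` on the interval `I` exactly when `α` is constant.
-/

theorem Set.OrdConnected.uniqueDiffOn {s : Set ℝ} (hs : s.OrdConnected) (hnt : s.Nontrivial) :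
    UniqueDiffOn ℝ s :=
  have hconv : Convex ℝ s := hs.convex
  uniqueDiffOn_convex hconv (hconv.nontrivial_iff_nonempty_interior.mp hnt)

theorem Set.OrdConnected.forall_deriv_eq_zero_iff_const {E : Type*}
    [NormedAddCommGroup E] [NormedSpace ℝ E] {s : Set ℝ} {f f' : ℝ → E}
    (hs : s.OrdConnected) (hnt : s.Nontrivial) (hf : ∀ t ∈ s, HasDerivWithinAt f (f' t) s t) :
    (∀ t ∈ s, f' t = 0) ↔ ∀ t ∈ s, ∀ u ∈ s, f t = f u := by
  constructor
  · intro h0 t ht u hu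
    have := hs.convex.norm_image_sub_le_of_norm_hasDerivWithin_le hf
      (fun v hv => (norm_eq_zero.mpr (h0 v hv)).le) hu ht
    rwa [zero_mul, norm_le_zero_iff, sub_eq_zero] at this
  · intro hconst t ht
    have hzero : HasDerivWithinAt f 0 s t :=
      (hasDerivWithinAt_const t s (f t)).congr_of_mem (fun u hu => hconst u hu t ht) ht
    exact (hs.uniqueDiffOn hnt t ht).eq_deriv s (hf t ht) hzero

theorem UniqueDiffWithinAt.eq_deriv_of_eqOn {s : Set ℝ} {t : ℝ} {f g : ℝ → ℝ} {f' g' : ℝ}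
    (hs : UniqueDiffWithinAt ℝ s t) (ht : t ∈ s) (hfg : ∀ u ∈ s, f u = g u)
    (hf : HasDerivWithinAt f f' s t) (hg : HasDerivWithinAt g g' s t) : f' = g' :=
  hs.eq_deriv s hf (hg.congr_of_mem hfg ht)

section Lightlike

open Complex

variable {s : Set ℝ} {t : ℝ} {a b c : ℝ → ℝ} {a' b' c' : ℝ}

theorem mul_deriv_add_mul_deriv_eq_of_sq_add_sq (hs : UniqueDiffWithinAt ℝ s t) (ht : t ∈ s)
    (hnull : ∀ u ∈ s, a u ^ 2 + b u ^ 2 = c u ^ 2) (ha : HasDerivWithinAt a a' s t)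
    (hb : HasDerivWithinAt b b' s t) (hc : HasDerivWithinAt c c' s t) :
    a t * a' + b t * b' = c t * c' := by
  have := hs.eq_deriv_of_eqOn ht hnull ((ha.pow 2).add (hb.pow 2)) (hc.pow 2)
  push_cast at this
  linarith

theorem hasDerivWithinAt_div_of_sq_add_sq (hs : UniqueDiffWithinAt ℝ s t) (ht : t ∈ s)
    (hnull : ∀ u ∈ s, a u ^ 2 + b u ^ 2 = c u ^ 2) (ha : HasDerivWithinAt a a' s t)
    (hb : HasDerivWithinAt b b' s t) (hc : HasDerivWithinAt c c' s t) (hc0 : c t ≠ 0) :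
    HasDerivWithinAt (fun u => ((a u : ℂ) + I * b u) / c u)
      (I * ((a t + I * b t) / c t) * (((a t * b' - b t * a') / c t ^ 2 : ℝ) : ℂ)) s t := by
  have hrelC : (a t : ℂ) * a' + b t * b' = c t * c' := by
    exact_mod_cast mul_deriv_add_mul_deriv_eq_of_sq_add_sq hs ht hnull ha hb hc
  have hnullC : (a t : ℂ) ^ 2 + b t ^ 2 = c t ^ 2 := by exact_mod_cast hnull t ht
  have hc0C : (c t : ℂ) ≠ 0 := by exact_mod_cast hc0
  refine ((ha.ofReal_comp.add (hb.ofReal_comp.const_mul I)).div hc.ofReal_comp hc0C).congr_deriv ?_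
  push_cast
  field_simp
  simp only [Pi.add_apply]
  linear_combination -((a' : ℂ) + I * b') * hnullC + ((a t : ℂ) + I * b t) * hrelC +
    (b t : ℂ) * (a' * b t - a t * b') * I_sq

theorem deriv_ne_zero_iff_of_eqOn_div_of_sq_add_sq {G : ℝ → ℂ} {G' : ℂ}
    (hs : UniqueDiffWithinAt ℝ s t) (ht : t ∈ s)
    (hnull : ∀ u ∈ s, a u ^ 2 + b u ^ 2 = c u ^ 2) (ha : HasDerivWithinAt a a' s t)
    (hb : HasDerivWithinAt b b' s t) (hc : HasDerivWithinAt c c' s t) (hc0 : ∀ u ∈ s, c u ≠ 0)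
    (hGeq : ∀ u ∈ s, G u = ((a u : ℂ) + I * b u) / c u) (hG : HasDerivWithinAt G G' s t) :
    G' ≠ 0 ↔ a t * b' - b t * a' ≠ 0 := by
  have hG' := hs.eq_deriv s hG
    ((hasDerivWithinAt_div_of_sq_add_sq hs ht hnull ha hb hc (hc0 t ht)).congr_of_mem hGeq ht)
  have hab : (a t : ℂ) + I * b t ≠ 0 := by
    intro h
    have ha0 : a t = 0 := by simpa using congrArg re h
    have hb0 : b t = 0 := by simpa using congrArg im h
    apply hc0 t ht
    simpa [ha0, hb0] using (hnull t ht).symm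
  have hc0C : (c t : ℂ) ≠ 0 := by exact_mod_cast hc0 t ht
  rw [hG']
  simp only [ne_eq, mul_eq_zero, I_ne_zero, div_eq_zero_iff, hab, hc0C, ofReal_eq_zero,
    pow_eq_zero_iff two_ne_zero, hc0 t ht, false_or, or_false]

end Lightlike

theorem eq_zero_and_eq_zero_of_sq_add_sq_eq_zero {a b : ℝ} (h : a ^ 2 + b ^ 2 = 0) :
    a = 0 ∧ b = 0 := by
  simpa using (add_eq_zero_iff_of_nonneg (sq_nonneg a) (sq_nonneg b)).mp h

theorem stmt_7_general (I : Set ℝ) (hI : I.OrdConnected) (hInt : I.Nontrivial)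
    (α α' β β' : ℝ → Fin 3 → ℝ) (G G' : ℝ → ℂ)
    (hα : ∀ t ∈ I, ∀ j, HasDerivWithinAt (fun s => α s j) (α' t j) I t)
    (hβ : ∀ t ∈ I, ∀ j, HasDerivWithinAt (fun s => β s j) (β' t j) I t)
    (hnullβ : ∀ t ∈ I, β t 0 ^ 2 + β t 1 ^ 2 = β t 2 ^ 2)
    (hne : ∀ t ∈ I, ¬ (α' t = 0 ∧ β t = 0))
    (hG : ∀ t ∈ I, HasDerivWithinAt G (G' t) I t)
    (hGβ : ∀ t ∈ I, β t 2 ≠ 0 →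
      G t = ((β t 0 : ℂ) + Complex.I * (β t 1 : ℂ)) / (β t 2 : ℂ)) :
    (∀ t ∈ I, α' t = 0 ∧ G' t ≠ 0) ↔
    ((∀ t ∈ I, ∀ s ∈ I, α t = α s) ∧
      ∀ t ∈ I, β t 0 * β' t 1 - β t 1 * β' t 0 ≠ 0) := by
  have hconst := hI.forall_deriv_eq_zero_iff_const hInt
    fun t ht => hasDerivWithinAt_pi.mpr (hα t ht)
  have hGcross (hβ₂ : ∀ t ∈ I, β t 2 ≠ 0) (t : ℝ) (ht : t ∈ I) :
      G' t ≠ 0 ↔ β t 0 * β' t 1 - β t 1 * β' t 0 ≠ 0 :=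
    deriv_ne_zero_iff_of_eqOn_div_of_sq_add_sq (hI.uniqueDiffOn hInt t ht) ht hnullβ
      (hβ t ht 0) (hβ t ht 1) (hβ t ht 2) hβ₂ (fun u hu => hGβ u hu (hβ₂ u hu)) (hG t ht)
  have hβ₀₁ (t : ℝ) (ht : t ∈ I) (h : β t 2 = 0) : β t 0 = 0 ∧ β t 1 = 0 :=
    eq_zero_and_eq_zero_of_sq_add_sq_eq_zero (by rw [hnullβ t ht, h, zero_pow two_ne_zero])
  rw [← hconst]
  constructor
  · intro h
    have hβ₂ (t : ℝ) (ht : t ∈ I) : β t 2 ≠ 0 := fun h₂ => hne t ht ⟨(h t ht).1, by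
      obtain ⟨h₀, h₁⟩ := hβ₀₁ t ht h₂
      ext j; fin_cases j <;> assumption⟩
    exact ⟨fun t ht => (h t ht).1, fun t ht => (hGcross hβ₂ t ht).mp (h t ht).2⟩
  · rintro ⟨hα'0, hcross⟩
    have hβ₂ (t : ℝ) (ht : t ∈ I) : β t 2 ≠ 0 := fun h₂ => hcross t ht (by
      obtain ⟨h₀, h₁⟩ := hβ₀₁ t ht h₂
      rw [h₀, h₁]; ring)
    exact fun t ht => ⟨hα'0 t ht, (hGcross hβ₂ t ht).mpr (hcross t ht)⟩

/-- Corollary 3.3: for `λ(t) = (t, 0)`, the trace of `λ` consists of shrinking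
singular points, i.e. `α'(t) = 0` and `G'(t) ≠ 0` for all `t ∈ I`, if and only if
`α` is constant on `I` and `β₁β₂' - β₂β₁' ≠ 0` on `I`. -/
theorem stmt_7 (I : Set ℝ) (hI : I.OrdConnected) (hInt : I.Nontrivial)
    (α α' α'' β β' : ℝ → Fin 3 → ℝ) (G G' : ℝ → ℂ)
    (hα : ∀ t ∈ I, ∀ j, HasDerivWithinAt (fun s => α s j) (α' t j) I t)
    (hα' : ∀ t ∈ I, ∀ j, HasDerivWithinAt (fun s => α' s j) (α'' t j) I t)
    (hα''c : ∀ j, ContinuousOn (fun s => α'' s j) I)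
    (hβ : ∀ t ∈ I, ∀ j, HasDerivWithinAt (fun s => β s j) (β' t j) I t)
    (hβ'c : ∀ j, ContinuousOn (fun s => β' s j) I)
    (hnullα : ∀ t ∈ I, α' t 0 ^ 2 + α' t 1 ^ 2 = α' t 2 ^ 2)
    (hnullβ : ∀ t ∈ I, β t 0 ^ 2 + β t 1 ^ 2 = β t 2 ^ 2)
    (horth : ∀ t ∈ I, α' t 0 * β t 0 + α' t 1 * β t 1 = α' t 2 * β t 2)
    (hne : ∀ t ∈ I, ¬ (α' t = 0 ∧ β t = 0))
    (hG : ∀ t ∈ I, HasDerivWithinAt G (G' t) I t)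
    (hGα : ∀ t ∈ I, α' t ≠ 0 →
      G t = ((α' t 0 : ℂ) + Complex.I * (α' t 1 : ℂ)) / (α' t 2 : ℂ))
    (hGβ : ∀ t ∈ I, β t 2 ≠ 0 →
      G t = ((β t 0 : ℂ) + Complex.I * (β t 1 : ℂ)) / (β t 2 : ℂ)) :
    (∀ t ∈ I, α' t = 0 ∧ G' t ≠ 0) ↔
    ((∀ t ∈ I, ∀ s ∈ I, α t = α s) ∧
      ∀ t ∈ I, β t 0 * β' t 1 - β t 1 * β' t 0 ≠ 0) :=
  stmt_7_general I hI hInt α α' β β' G G' hα hβ hnullβ hne hG hGβ
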